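/- The poset ℙ₀ is countably closed: for every sequence f₀, f₁, f₂, … of elements of ℙ₀ such that f_{k+1} ⊇* f_k for every k (i.e. f_k ∖ f_{k+1} is finite), there exists f ∈ ℙ₀ such that f ⊇* f_k for every k. -/

import Mathlib

/-- A partial function from ℕ to {0,1} is represented as `f : ℕ → Option Bool`,
with `dom f = {n | f n ≠ none}` and value `1` represented by `true`.
`memP1 f` says `f ∈ ℙ₁`: `limsup_{n→∞} |[2^n, 2^{n+1}) ∖ dom f| = ∞`. -/
def memP1 (f : ℕ → Option Bool) : Prop :=
  ∀ m N : ℕ, ∃ n ≥ N, m ≤ ((Finset.Ico (2 ^ n) (2 ^ (n + 1))).filter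
    (fun i => f i = none)).card

/-- `memP0 f` says `f ∈ ℙ₀`: `f ∈ ℙ₁`, for every `n` the set `f⁻¹(1) ∩ [2^n,2^{n+1})`
has at most one element, and it is nonempty if and only if `[2^n,2^{n+1}) ⊆ dom f`. -/
def memP0 (f : ℕ → Option Bool) : Prop :=
  memP1 f ∧
  (∀ n : ℕ, ({i | f i = some true} ∩ Set.Ico (2 ^ n) (2 ^ (n + 1))).Subsingleton) ∧
  (∀ n : ℕ, ({i | f i = some true} ∩ Set.Ico (2 ^ n) (2 ^ (n + 1))).Nonempty ↔
    ∀ i ∈ Set.Ico (2 ^ n) (2 ^ (n + 1)), f i ≠ none)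

/-!
Choose blocks `φ 0 < φ 1 < ⋯` such that the block `[2^{φ k}, 2^{φ k + 1})` has at least `k`
holes in `F k`, and such that every disagreement of `F k` with an earlier `F j` on `dom (F j)`
lies below `2^{φ k}`. Then glue: on a block `n` with `φ k ≤ n < φ (k+1)`, let `f` agree with
`F k`. The conditions of ℙ₀ other than ℙ₁ concern one block at a time, so `f` inherits them;
the blocks `φ k` witness ℙ₁; and above `2^{φ j}` the function `f` extends `F j`.
-/

open Filter Finset

section AlmostExtends

variable {α β : Type*}

/-- `AlmostExtends f g` is `f ⊇* g`. -/
def AlmostExtends (f g : α → Option β) : Prop :=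
  {n | g n ≠ none ∧ f n ≠ g n}.Finite

theorem AlmostExtends.refl (f : α → Option β) : AlmostExtends f f := by
  simp [AlmostExtends]

theorem AlmostExtends.trans {f g h : α → Option β} (hfg : AlmostExtends f g)
    (hgh : AlmostExtends g h) : AlmostExtends f h := by
  refine (hgh.union hfg).subset fun n ⟨hn, hfn⟩ => ?_
  by_cases hg : g n = h n
  · exact Or.inr ⟨hg ▸ hn, hg ▸ hfn⟩
  · exact Or.inl ⟨hn, hg⟩

theorem almostExtends_of_succ {F : ℕ → α → Option β}
    (hF : ∀ k, AlmostExtends (F (k + 1)) (F k)) {j k : ℕ} (hjk : j ≤ k) :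
    AlmostExtends (F k) (F j) := by
  induction k, hjk using Nat.le_induction with
  | base => exact .refl _
  | succ k _ ih => exact (hF k).trans ih

end AlmostExtends

section Blocks

def holes (f : ℕ → Option Bool) (n : ℕ) : Finset ℕ :=
  (Finset.Ico (2 ^ n) (2 ^ (n + 1))).filter (fun i => f i = none)

def BlockCond (f : ℕ → Option Bool) (n : ℕ) : Prop :=
  ({i | f i = some true} ∩ Set.Ico (2 ^ n) (2 ^ (n + 1))).Subsingleton ∧
  (({i | f i = some true} ∩ Set.Ico (2 ^ n) (2 ^ (n + 1))).Nonempty ↔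
    ∀ i ∈ Set.Ico (2 ^ n) (2 ^ (n + 1)), f i ≠ none)

theorem memP1_iff_frequently {f : ℕ → Option Bool} :
    memP1 f ↔ ∀ m, ∃ᶠ n in atTop, m ≤ #(holes f n) := by
  simp only [memP1, holes, frequently_atTop]

theorem memP0_iff {f : ℕ → Option Bool} : memP0 f ↔ memP1 f ∧ ∀ n, BlockCond f n := by
  simp only [memP0, BlockCond, forall_and]

variable {f g : ℕ → Option Bool} {n : ℕ}

theorem holes_congr (h : Set.EqOn f g (Set.Ico (2 ^ n) (2 ^ (n + 1)))) :
    holes f n = holes g n :=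
  Finset.filter_congr fun i hi => by rw [h (by simpa using hi)]

theorem blockCond_congr (h : Set.EqOn f g (Set.Ico (2 ^ n) (2 ^ (n + 1)))) :
    BlockCond f n ↔ BlockCond g n := by
  have hones : {i | f i = some true} ∩ Set.Ico (2 ^ n) (2 ^ (n + 1)) =
      {i | g i = some true} ∩ Set.Ico (2 ^ n) (2 ^ (n + 1)) := by
    ext i
    simp only [Set.mem_inter_iff, Set.mem_ofPred_eq, and_congr_left_iff]
    exact fun hi => by rw [h hi]
  unfold BlockCond
  rw [hones]
  exact and_congr_right fun _ => iff_congr Iff.rfl (forall₂_congr fun i hi => by rw [h hi])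

end Blocks

section Stage

variable {φ : ℕ → ℕ}

/-- The last `k` with `φ k ≤ m`, or `0` if there is none. -/
def stageOf (φ : ℕ → ℕ) (m : ℕ) : ℕ :=
  Nat.findGreatest (fun k => φ k ≤ m) m

theorem le_stageOf (hφ : StrictMono φ) {j m : ℕ} (h : φ j ≤ m) : j ≤ stageOf φ m :=
  Nat.le_findGreatest (hφ.le_apply.trans h) h

theorem apply_stageOf_le (hφ : StrictMono φ) {j m : ℕ} (h : φ j ≤ m) : φ (stageOf φ m) ≤ m :=
  Nat.findGreatest_spec (P := fun k => φ k ≤ m) (hφ.le_apply.trans h) h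

theorem stageOf_apply (hφ : StrictMono φ) (k : ℕ) : stageOf φ (φ k) = k :=
  le_antisymm (hφ.le_iff_le.1 (apply_stageOf_le hφ le_rfl)) (le_stageOf hφ le_rfl)

end Stage

section Glue

variable {β : Type*}

/-- On the block `[2^n, 2^{n+1})`, take the values of `F (K n)`. -/
def blockwise (K : ℕ → ℕ) (F : ℕ → ℕ → β) (i : ℕ) : β :=
  F (K (Nat.log 2 i)) i

theorem blockwise_eqOn (K : ℕ → ℕ) (F : ℕ → ℕ → β) (n : ℕ) :
    Set.EqOn (blockwise K F) (F (K n)) (Set.Ico (2 ^ n) (2 ^ (n + 1))) := fun _ hi => by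
  rw [blockwise, Nat.log_eq_of_pow_le_of_lt_pow hi.1 hi.2]

end Glue

section Construction

variable {F : ℕ → ℕ → Option Bool} {φ : ℕ → ℕ}

theorem exists_strictMono_blocks (hF : ∀ k, memP1 (F k))
    (hext : ∀ j k, j ≤ k → AlmostExtends (F k) (F j)) :
    ∃ φ : ℕ → ℕ, StrictMono φ ∧ ∀ k, k ≤ #(holes (F k) (φ k)) ∧
      ∀ j ≤ k, ∀ i, F j i ≠ none → F k i ≠ F j i → i < 2 ^ φ k := by
  refine extraction_forall_of_frequently (P := fun k n => k ≤ #(holes (F k) n) ∧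
    ∀ j ≤ k, ∀ i, F j i ≠ none → F k i ≠ F j i → i < 2 ^ n) fun k => ?_
  refine (memP1_iff_frequently.1 (hF k) k).and_eventually ?_
  have hbelow : ∀ i, ∀ᶠ n in atTop, i < 2 ^ n := fun i =>
    (tendsto_pow_atTop_atTop_of_one_lt one_lt_two).eventually_gt_atTop i
  filter_upwards [(Set.finite_Iic k).eventually_all.2 fun j hj =>
    (hext j k hj).eventually_all.2 fun i _ => hbelow i] with n hn j hj i hdom hne
  exact hn j hj i ⟨hdom, hne⟩

theorem memP0_blockwise (hF : ∀ k, memP0 (F k)) (hφ : StrictMono φ)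
    (hholes : ∀ k, k ≤ #(holes (F k) (φ k))) : memP0 (blockwise (stageOf φ) F) := by
  rw [memP0_iff, memP1_iff_frequently]
  refine ⟨fun m => frequently_atTop.2 fun N =>
    ⟨φ (max m N), (le_max_right m N).trans hφ.le_apply, ?_⟩, fun n => ?_⟩
  · rw [holes_congr (blockwise_eqOn _ _ _), stageOf_apply hφ]
    exact (le_max_left m N).trans (hholes _)
  · exact (blockCond_congr (blockwise_eqOn _ _ n)).2 ((memP0_iff.1 (hF _)).2 n)

theorem almostExtends_blockwise (hφ : StrictMono φ)
    (hbound : ∀ k, ∀ j ≤ k, ∀ i, F j i ≠ none → F k i ≠ F j i → i < 2 ^ φ k) (j : ℕ) :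
    AlmostExtends (blockwise (stageOf φ) F) (F j) := by
  refine (Set.finite_Iio (2 ^ φ j)).subset fun i ⟨hdom, hne⟩ =>
    lt_of_not_ge fun hi => ?_
  have hjm : φ j ≤ Nat.log 2 i := Nat.le_log_of_pow_le one_lt_two hi
  have hlt : i < 2 ^ φ (stageOf φ (Nat.log 2 i)) := hbound _ j (le_stageOf hφ hjm) i hdom hne
  have hle : 2 ^ φ (stageOf φ (Nat.log 2 i)) ≤ i :=
    (Nat.pow_le_pow_right two_pos (apply_stageOf_le hφ hjm)).trans
      (Nat.pow_log_le_self 2 (hi.trans_lt' (Nat.two_pow_pos _)).ne')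
  exact hle.not_gt hlt

end Construction

/-- The poset ℙ₀ is countably closed: for every sequence `F 0, F 1, F 2, …` of elements
of ℙ₀ such that `F (k+1) ⊇* F k` for every `k` (i.e. `F k ∖ F (k+1)` is finite), there is
`f ∈ ℙ₀` with `f ⊇* F k` for every `k`. -/
theorem P0_countably_closed (F : ℕ → ℕ → Option Bool)
    (hF : ∀ k, memP0 (F k))
    (hchain : ∀ k, {n : ℕ | F k n ≠ none ∧ F (k + 1) n ≠ F k n}.Finite) :
    ∃ f : ℕ → Option Bool, memP0 f ∧
      ∀ k, {n : ℕ | F k n ≠ none ∧ f n ≠ F k n}.Finite := by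
  obtain ⟨φ, hφ, hblocks⟩ := exists_strictMono_blocks (fun k => (hF k).1)
    fun _ _ => almostExtends_of_succ hchain
  exact ⟨blockwise (stageOf φ) F, memP0_blockwise hF hφ fun k => (hblocks k).1,
    almostExtends_blockwise hφ fun k => (hblocks k).2⟩
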